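/- (Tweedie's formula, 1-dimensional Gaussian case) Let z be a real random variable with density p_z, let σ > 0, and let x | z ∼ N(z, σ²), so the marginal density of x is p(x) = ∫ p_z(z) φ_σ(x − z) dz where φ_σ is the N(0, σ²) density. Assume p(x) > 0 and that differentiation under the integral sign is valid. Then E[z | x] = x + σ² · (d/dx) log p(x). -/

import Mathlib

open MeasureTheory Real

theorem tweedie_formula_one_dim (pz : ℝ → ℝ) (σ : ℝ) (hσ : 0 < σ)
    (φ : ℝ → ℝ) (hφ : ∀ t, φ t = (1 / (σ * Real.sqrt (2 * Real.pi))) * Real.exp (-t ^ 2 / (2 * σ ^ 2)))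
    (p : ℝ → ℝ) (hp : ∀ x, p x = ∫ z, pz z * φ (x - z))
    (x : ℝ) (hpx : 0 < p x)
    (hderiv : HasDerivAt p (∫ z, pz z * ((z - x) / σ ^ 2) * φ (x - z)) x)
    (hint1 : Integrable (fun z => pz z * φ (x - z)))
    (hint2 : Integrable (fun z => z * pz z * φ (x - z))) :
    (∫ z, z * pz z * φ (x - z)) / p x =
      x + σ ^ 2 * deriv (fun t => Real.log (p t)) x := by
  have hσ2 : (σ : ℝ) ^ 2 ≠ 0 := pow_ne_zero 2 hσ.ne'
  have hlog : HasDerivAt (fun t => Real.log (p t))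
      ((∫ z, pz z * ((z - x) / σ ^ 2) * φ (x - z)) / p x) x :=
    hderiv.log hpx.ne'
  rw [hlog.deriv]
  have hkey : (∫ z, pz z * ((z - x) / σ ^ 2) * φ (x - z)) =
      (1 / σ ^ 2) * (∫ z, z * pz z * φ (x - z)) - (x / σ ^ 2) * p x := by
    rw [hp x, ← integral_const_mul, ← integral_const_mul, ← integral_sub
      (hint2.const_mul _) (hint1.const_mul _)]
    congr 1; ext z; field_simp
  rw [hkey]
  field_simp
  ring
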